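/- arXiv:math/0204324 — 2 statements merged into one kernel-verified Lean document; each statement's English description precedes it below -/
import Mathlib

section
/- Let f : 𝕋^d → [0,1] be a trigonometric polynomial with f̂(k) = 0 whenever ‖k‖_∞ > m. Then P^f is m-dependent: for any two subsets S_1, S_2 ⊂ ℤ^d with ‖e − e'‖_∞ > m for all e ∈ S_1 and e' ∈ S_2, the σ-fields F(S_1) and F(S_2) are independent under P^f. -/
open MeasureTheory Matrix Filter Topology
open scoped ENNReal Real

noncomputable section

abbrev Torus (d : ℕ) : Type := Fin d → AddCircle (1 : ℝ)

abbrev Config (d : ℕ) : Type := (Fin d → ℤ) → Bool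

/-- The character `e_k : x ↦ e^{2πi k·x}` on the `d`-dimensional torus. -/
def charFn {d : ℕ} (k : Fin d → ℤ) (x : Torus d) : ℂ := ∏ i, (fourier (k i) (x i) : ℂ)

/-- The Fourier coefficient `f̂(k) = ∫ f(x) e^{-2πi k·x} dλ_d(x)`. -/
def fCoeff {d : ℕ} (f : Torus d → ℝ) (k : Fin d → ℤ) : ℂ :=
  ∫ x : Torus d, (f x : ℂ) * charFn (-k) x ∂volume

/-- Translation of configurations by `v ∈ ℤ^d`. -/
def shiftC {d : ℕ} (v : Fin d → ℤ) (η : Config d) : Config d := fun k => η (k + v)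

/-- `P` is the determinantal measure associated to `f`. -/
def IsDeterminantal {d : ℕ} (f : Torus d → ℝ) (P : Measure (Config d)) : Prop :=
  ∀ (n : ℕ) (e : Fin n → (Fin d → ℤ)), Function.Injective e →
    (((P {η : Config d | ∀ i, η (e i) = true}).toReal : ℝ) : ℂ) =
      Matrix.det (Matrix.of fun i j : Fin n => fCoeff f (e j - e i))

/-- The σ-field on `{0,1}^{ℤ^d}` generated by the coordinates in `S`. -/
def coordSigma {d : ℕ} (S : Set (Fin d → ℤ)) : MeasurableSpace (Config d) :=
  MeasurableSpace.comap (fun (η : Config d) (j : S) => η (j : Fin d → ℤ)) inferInstance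

/-!
The σ-field `F(S)` is generated by the π-system of events "all sites of a finite `E ⊆ S` are
occupied", so independence only has to be checked on these events. Their probabilities are
principal minors `det [f̂(e_j - e_i)]`; for `E₁ ⊆ S₁`, `E₂ ⊆ S₂` the coefficients
`f̂(e₁ - e₂)` with `e₁ ∈ E₁`, `e₂ ∈ E₂` vanish, because the frequency `e₁ - e₂` has some
coordinate of absolute value `> m`. The correlation matrix of `E₁ ∪ E₂` is therefore block
triangular and its determinant factors.
-/

open ProbabilityTheory

variable {d : ℕ}

def allOnes (s : Set (Fin d → ℤ)) : Set (Config d) := {η | ∀ e ∈ s, η e = true}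

lemma allOnes_union (s t : Set (Fin d → ℤ)) : allOnes (s ∪ t) = allOnes s ∩ allOnes t := by
  ext η
  simp only [allOnes, Set.mem_union, Set.mem_inter_iff, Set.mem_ofPred_eq, or_imp, forall_and]

lemma allOnes_singleton (e : Fin d → ℤ) : allOnes {e} = (fun η : Config d => η e) ⁻¹' {true} := by
  simp [allOnes, Set.preimage]

def allOnesSystem (S : Set (Fin d → ℤ)) : Set (Set (Config d)) :=
  {A | ∃ E : Finset (Fin d → ℤ), ↑E ⊆ S ∧ A = allOnes E}

lemma isPiSystem_allOnesSystem (S : Set (Fin d → ℤ)) : IsPiSystem (allOnesSystem S) := by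
  rintro _ ⟨E, hE, rfl⟩ _ ⟨E', hE', rfl⟩ -
  exact ⟨E ∪ E', by simpa using Set.union_subset hE hE', by rw [Finset.coe_union, allOnes_union]⟩

lemma coordSigma_le (S : Set (Fin d → ℤ)) :
    coordSigma S ≤ (inferInstance : MeasurableSpace (Config d)) :=
  Measurable.comap_le (measurable_pi_lambda _ fun _ => measurable_pi_apply _)

lemma coordSigma_eq_generateFrom_allOnesSystem (S : Set (Fin d → ℤ)) :
    coordSigma S = MeasurableSpace.generateFrom (allOnesSystem S) := by
  apply le_antisymm
  · let _ := MeasurableSpace.generateFrom (allOnesSystem S)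
    refine Measurable.comap_le (measurable_pi_lambda _ fun e => measurable_to_bool ?_)
    rw [← allOnes_singleton]
    exact MeasurableSpace.measurableSet_generateFrom ⟨{(e : Fin d → ℤ)}, by simp, by simp⟩
  · refine MeasurableSpace.generateFrom_le ?_
    rintro _ ⟨E, hE, rfl⟩
    have : allOnes (E : Set (Fin d → ℤ)) = ⋂ e ∈ (E : Set (Fin d → ℤ)), allOnes {e} := by
      ext η; simp [allOnes]
    rw [this]
    refine MeasurableSet.biInter E.countable_toSet fun e he => ?_
    rw [allOnes_singleton]
    exact ((measurable_pi_apply (⟨e, hE he⟩ : S)).comp (comap_measurable _))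
      (measurableSet_singleton true)

namespace IsDeterminantal

variable {f : Torus d → ℝ} {P : Measure (Config d)}

lemma measureReal_allOnes_range (hP : IsDeterminantal f P) {ι : Type*} [Fintype ι]
    [DecidableEq ι] {e : ι → Fin d → ℤ} (he : Function.Injective e) :
    (P.real (allOnes (Set.range e)) : ℂ) = (Matrix.of fun i j => fCoeff f (e j - e i)).det := by
  let σ := Fintype.equivFin ι
  have h := hP _ (e ∘ σ.symm) (he.comp σ.symm.injective)
  have hset : {η : Config d | ∀ i, η ((e ∘ σ.symm) i) = true} = allOnes (Set.range e) := by
    ext η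
    simp only [allOnes, Set.forall_mem_range, Set.mem_ofPred_eq, Function.comp_apply]
    exact (σ.symm.surjective.forall (p := fun i => η (e i) = true)).symm
  rw [hset] at h
  rw [measureReal_def, h, ← Matrix.det_submatrix_equiv_self σ.symm]
  rfl

lemma measureReal_allOnes_union (hP : IsDeterminantal f P) {E₁ E₂ : Finset (Fin d → ℤ)}
    (hdisj : Disjoint E₁ E₂) (hcross : ∀ e₁ ∈ E₁, ∀ e₂ ∈ E₂, fCoeff f (e₁ - e₂) = 0) :
    P.real (allOnes (↑E₁ ∪ ↑E₂)) = P.real (allOnes E₁) * P.real (allOnes E₂) := by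
  let e : E₁ ⊕ E₂ → Fin d → ℤ := Sum.elim Subtype.val Subtype.val
  have he : Function.Injective e := Subtype.val_injective.sumElim Subtype.val_injective
    fun a b hab => Finset.disjoint_left.mp hdisj a.2 (hab ▸ b.2)
  have hrange : Set.range e = ↑E₁ ∪ ↑E₂ := by
    simp only [e, Set.Sum.elim_range, Subtype.range_coe_subtype, Finset.setOfPred_mem]
  have hblocks : (Matrix.of fun i j => fCoeff f (e j - e i)) = Matrix.fromBlocks
      (Matrix.of fun i j : E₁ => fCoeff f (j - i))
      (Matrix.of fun (i : E₁) (j : E₂) => fCoeff f (j - i))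
      0 (Matrix.of fun i j : E₂ => fCoeff f (j - i)) := by
    ext (i | i) (j | j) <;> simp [e, hcross]
  have h := measureReal_allOnes_range hP he
  have h₁ := measureReal_allOnes_range hP (Subtype.val_injective (p := (· ∈ E₁)))
  have h₂ := measureReal_allOnes_range hP (Subtype.val_injective (p := (· ∈ E₂)))
  simp only [Subtype.range_coe_subtype, Finset.setOfPred_mem] at h₁ h₂
  rw [hrange, hblocks, Matrix.det_fromBlocks_zero₂₁, ← h₁, ← h₂] at h
  exact_mod_cast h

lemma indepSets_allOnesSystem (hP : IsDeterminantal f P) [IsFiniteMeasure P]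
    {S₁ S₂ : Set (Fin d → ℤ)} (hdisj : Disjoint S₁ S₂)
    (hcross : ∀ e₁ ∈ S₁, ∀ e₂ ∈ S₂, fCoeff f (e₁ - e₂) = 0) :
    IndepSets (allOnesSystem S₁) (allOnesSystem S₂) P := by
  rw [IndepSets_iff]
  rintro _ _ ⟨E₁, hE₁, rfl⟩ ⟨E₂, hE₂, rfl⟩
  have h := hP.measureReal_allOnes_union
    (Finset.disjoint_coe.mp (hdisj.mono hE₁ hE₂)) fun e₁ h₁ e₂ h₂ => hcross _ (hE₁ h₁) _ (hE₂ h₂)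
  rwa [allOnes_union, measureReal_def, measureReal_def, measureReal_def, ← ENNReal.toReal_mul,
    ENNReal.toReal_eq_toReal_iff' (measure_ne_top _ _)
      (ENNReal.mul_ne_top (measure_ne_top _ _) (measure_ne_top _ _))] at h

lemma indep_coordSigma (hP : IsDeterminantal f P) [IsProbabilityMeasure P]
    {S₁ S₂ : Set (Fin d → ℤ)} (hdisj : Disjoint S₁ S₂)
    (hcross : ∀ e₁ ∈ S₁, ∀ e₂ ∈ S₂, fCoeff f (e₁ - e₂) = 0) :
    Indep (coordSigma S₁) (coordSigma S₂) P :=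
  (hP.indepSets_allOnesSystem hdisj hcross).indep (coordSigma_le S₁) (coordSigma_le S₂)
    (isPiSystem_allOnesSystem S₁) (isPiSystem_allOnesSystem S₂)
    (coordSigma_eq_generateFrom_allOnesSystem S₁) (coordSigma_eq_generateFrom_allOnesSystem S₂)

end IsDeterminantal

theorem statement5_general {d : ℕ} (f : Torus d → ℝ) (m : ℕ)
    (hfm : ∀ k : Fin d → ℤ, (∃ i, (m : ℤ) < |k i|) → fCoeff f k = 0)
    (P : Measure (Config d)) (hP : IsProbabilityMeasure P)
    (hPdet : IsDeterminantal f P) :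
    ∀ S₁ S₂ : Set (Fin d → ℤ),
      (∀ e ∈ S₁, ∀ e' ∈ S₂, ∃ i, (m : ℤ) < |e i - e' i|) →
      ∀ A B : Set (Config d),
        MeasurableSet[coordSigma S₁] A → MeasurableSet[coordSigma S₂] B →
        P (A ∩ B) = P A * P B := by
  intro S₁ S₂ hsep A B hA hB
  have hdisj : Disjoint S₁ S₂ := Set.disjoint_left.mpr fun e h₁ h₂ => by
    obtain ⟨i, hi⟩ := hsep e h₁ e h₂
    simp only [sub_self, abs_zero] at hi
    omega
  have hcross : ∀ e₁ ∈ S₁, ∀ e₂ ∈ S₂, fCoeff f (e₁ - e₂) = 0 := fun e₁ h₁ e₂ h₂ =>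
    hfm _ (hsep e₁ h₁ e₂ h₂)
  exact (Indep_iff _ _ _).mp (hPdet.indep_coordSigma hdisj hcross) A B hA hB

/-- If `f` is a trigonometric polynomial with `f̂(k) = 0` whenever
`‖k‖_∞ > m`, then `P^f` is `m`-dependent: the σ-fields of two regions at `ℓ∞`-distance
greater than `m` are independent. -/
theorem statement5 {d : ℕ} (f : Torus d → ℝ) (hf : Measurable f)
    (hf01 : ∀ x, f x ∈ Set.Icc (0 : ℝ) 1) (m : ℕ)
    (hfm : ∀ k : Fin d → ℤ, (∃ i, (m : ℤ) < |k i|) → fCoeff f k = 0)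
    (P : Measure (Config d)) (hP : IsProbabilityMeasure P)
    (hPdet : IsDeterminantal f P) :
    ∀ S₁ S₂ : Set (Fin d → ℤ),
      (∀ e ∈ S₁, ∀ e' ∈ S₂, ∃ i, (m : ℤ) < |e i - e' i|) →
      ∀ A B : Set (Config d),
        MeasurableSet[coordSigma S₁] A → MeasurableSet[coordSigma S₂] B →
        P (A ∩ B) = P A * P B :=
  statement5_general f m hfm P hP hPdet

end
end

section
/- Let E be a countable set, H a closed subspace of ℓ²(E), and A, B finite disjoint subsets of E. Then P^H[η(e)=1 for all e ∈ A and η(e)=0 for all e ∈ B] > 0 if and only if the family {P_H e}_{e∈A} ∪ {P_{H^⊥} e}_{e∈B} is linearly independent in ℓ²(E). -/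
open MeasureTheory Matrix Filter Topology
open scoped ENNReal ComplexOrder

noncomputable section

/-- The complex Hilbert space `ℓ²(E)`. -/
abbrev l2 (E : Type) : Type := lp (fun _ : E => ℂ) 2

/-- The standard orthonormal basis vector of `ℓ²(E)` at `e ∈ E`. -/
def stdBasis {E : Type} [DecidableEq E] (e : E) : l2 E := lp.single 2 e (1 : ℂ)

/-- `P` is the determinantal probability measure `P^H` on `{0,1}^E` associated to the
closed subspace `H ⊆ ℓ²(E)`. -/
def IsDeterminantalSubspace {E : Type} [DecidableEq E] (H : Submodule ℂ (l2 E))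
    [Submodule.HasOrthogonalProjection H] (P : Measure (E → Bool)) : Prop :=
  ∀ (n : ℕ) (e : Fin n → E), Function.Injective e →
    (((P {η : E → Bool | ∀ i, η (e i) = true}).toReal : ℝ) : ℂ) =
      Matrix.det (Matrix.of fun i j : Fin n =>
        inner (𝕜 := ℂ) ((Submodule.orthogonalProjectionOnto H (stdBasis (e i)) : l2 E)) (stdBasis (e j)))

/-!
Write `v` for the family `P_H e_a (a ∈ A)`, `P_{H^⊥} e_b (b ∈ B)` and `M` for the matrix
`⟪v_i, e_j⟫`, whose rows are `⟪P_H e_a, e_j⟫` and `δ_bj - ⟪P_H e_b, e_j⟫`. Then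
`P^H[η = 1 on A, η = 0 on B] = det M`: for `B = ∅` this is the definition of `P^H`, and both
sides obey the same inclusion-exclusion rule, namely the values for `b ∈ B` and for `b ∈ A` add
up to the value with `b` deleted (for the determinant because it is linear in row `b` and
`δ_b = P_H e_b + P_{H^⊥} e_b`). Finally `M c = 0` iff `∑ c_i v_i = 0`: if `x`, `y` are the parts
of `∑ c_i e_i` supported on `A` and `B`, then `∑ c_i v_i = P_H x + P_{H^⊥} y`, and
`re ⟪P_H x + P_{H^⊥} y, x + y⟫ = ‖P_H x‖² + ‖P_{H^⊥} y‖²` since `x ⊥ y`.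
-/

open Function
open scoped InnerProductSpace

namespace Submodule

variable {𝕜 F ι : Type*} [RCLike 𝕜] [NormedAddCommGroup F] [InnerProductSpace 𝕜 F]
  (K : Submodule 𝕜 F) [K.HasOrthogonalProjection] (u : ι → F) (s : ι → Bool)

def splitProjection (i : ι) : F :=
  if s i then K.starProjection (u i) else Kᗮ.starProjection (u i)

def splitProjectionMatrix : Matrix ι ι 𝕜 :=
  Matrix.of fun i j => ⟪K.splitProjection u s i, u j⟫_𝕜

theorem re_inner_starProjection_add_starProjection_orthogonal {x y : F}
    (hxy : ⟪x, y⟫_𝕜 = 0) :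
    RCLike.re ⟪K.starProjection x + Kᗮ.starProjection y, x + y⟫_𝕜 =
      ‖K.starProjection x‖ ^ 2 + ‖Kᗮ.starProjection y‖ ^ 2 := by
  have hcross :
      ⟪Kᗮ.starProjection y, x⟫_𝕜 = -(starRingEnd 𝕜) ⟪K.starProjection x, y⟫_𝕜 := by
    rw [starProjection_orthogonal_val, inner_sub_left, ← inner_conj_symm, hxy, map_zero,
      zero_sub, inner_starProjection_left_eq_right, inner_conj_symm]
  have hx : RCLike.re ⟪K.starProjection x, x⟫_𝕜 = ‖K.starProjection x‖ ^ 2 :=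
    K.re_inner_starProjection_eq_normSq x
  have hy : RCLike.re ⟪Kᗮ.starProjection y, y⟫_𝕜 = ‖Kᗮ.starProjection y‖ ^ 2 :=
    Kᗮ.re_inner_starProjection_eq_normSq y
  rw [inner_add_left, inner_add_right, inner_add_right, hcross]
  simp only [map_add, map_neg, RCLike.conj_re, hx, hy]
  ring

variable [Fintype ι]

theorem splitProjectionMatrix_mulVec (c : ι → 𝕜) (i : ι) :
    (K.splitProjectionMatrix u s *ᵥ c) i = ⟪K.splitProjection u s i, ∑ j, c j • u j⟫_𝕜 := by
  simp [splitProjectionMatrix, mulVec, dotProduct, inner_sum, inner_smul_right, mul_comm]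

theorem sum_smul_splitProjection (c : ι → 𝕜) :
    ∑ i, c i • K.splitProjection u s i =
      K.starProjection (∑ i, (if s i then c i else 0) • u i) +
        Kᗮ.starProjection (∑ i, (if s i then 0 else c i) • u i) := by
  simp only [map_sum, map_smul, ← Finset.sum_add_distrib]
  refine Finset.sum_congr rfl fun i _ => ?_
  cases hi : s i <;> simp [splitProjection, hi]

theorem splitProjectionMatrix_mulVec_eq_zero_iff (hu : Orthonormal 𝕜 u) (c : ι → 𝕜) :
    K.splitProjectionMatrix u s *ᵥ c = 0 ↔ ∑ i, c i • K.splitProjection u s i = 0 := by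
  rw [sum_smul_splitProjection]
  set x := ∑ i, (if s i then c i else 0) • u i
  set y := ∑ i, (if s i then 0 else c i) • u i
  have hxy : ⟪x, y⟫_𝕜 = 0 := by
    rw [hu.inner_sum]
    exact Finset.sum_eq_zero fun i _ => by cases s i <;> simp
  have hsum : ∑ j, c j • u j = x + y := by
    rw [← Finset.sum_add_distrib]
    exact Finset.sum_congr rfl fun i _ => by cases s i <;> simp
  constructor
  · intro h
    have hzero : ⟪K.starProjection x + Kᗮ.starProjection y, x + y⟫_𝕜 = 0 := by
      rw [← sum_smul_splitProjection, ← hsum, sum_inner]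
      refine Finset.sum_eq_zero fun i _ => ?_
      rw [inner_smul_left, ← splitProjectionMatrix_mulVec, h, Pi.zero_apply, mul_zero]
    have hnorm := K.re_inner_starProjection_add_starProjection_orthogonal hxy
    rw [hzero, map_zero, eq_comm, add_eq_zero_iff_of_nonneg (sq_nonneg _) (sq_nonneg _),
      sq_eq_zero_iff, sq_eq_zero_iff, norm_eq_zero, norm_eq_zero] at hnorm
    rw [hnorm.1, hnorm.2, add_zero]
  · intro h
    obtain ⟨hx, hy⟩ := disjoint_iff_add_eq_zero.1 K.orthogonal_disjoint
      (K.starProjection_apply_mem x) (Kᗮ.starProjection_apply_mem y) h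
    have hPy : K.starProjection y = y := by
      rwa [starProjection_orthogonal_val, sub_eq_zero, eq_comm] at hy
    ext i
    rw [splitProjectionMatrix_mulVec, hsum, Pi.zero_apply]
    by_cases hi : s i
    · rw [splitProjection, if_pos hi, inner_starProjection_left_eq_right, map_add, hx, hPy,
        zero_add, hu.inner_right_fintype, if_pos hi]
    · rw [splitProjection, if_neg hi, inner_starProjection_left_eq_right, map_add, hy, add_zero,
        starProjection_orthogonal_val, hx, sub_zero, hu.inner_right_fintype, if_neg hi]

variable [DecidableEq ι]

theorem det_splitProjectionMatrix_ne_zero_iff (hu : Orthonormal 𝕜 u) :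
    (K.splitProjectionMatrix u s).det ≠ 0 ↔ LinearIndependent 𝕜 (K.splitProjection u s) := by
  rw [Fintype.linearIndependent_iff, Ne, ← exists_mulVec_eq_zero_iff]
  simp only [K.splitProjectionMatrix_mulVec_eq_zero_iff u s hu]
  constructor
  · intro h c hc
    by_contra! hne
    exact h ⟨c, fun h0 => by simp [h0] at hne, hc⟩
  · rintro h ⟨c, hc, hsum⟩
    exact hc (funext (h c hsum))

theorem det_splitProjectionMatrix_update_add (hu : Orthonormal 𝕜 u) (i : ι) :
    (K.splitProjectionMatrix u (update s i false)).det +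
        (K.splitProjectionMatrix u (update s i true)).det =
      ((K.splitProjectionMatrix u s).updateRow i (Pi.single i 1)).det := by
  set M := K.splitProjectionMatrix u
  have hrow (b : Bool) : M (update s i b) = (M s).updateRow i (M (update s i b) i) := by
    ext j k
    by_cases hj : j = i
    · subst hj; simp
    · simp [M, hj, splitProjectionMatrix, splitProjection]
  have hsingle : M (update s i false) i + M (update s i true) i = Pi.single i 1 := by
    ext j
    simp only [M, splitProjectionMatrix, splitProjection, Pi.add_apply, of_apply, update_self]
    rw [if_neg Bool.false_ne_true, if_pos trivial, ← inner_add_left, add_comm,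
      starProjection_add_starProjection_orthogonal, orthonormal_iff_ite.1 hu, Pi.single_apply]
    exact if_congr eq_comm rfl rfl
  rw [hrow false, hrow true, ← det_updateRow_add, hsingle]

end Submodule

theorem Matrix.det_updateRow_single_self {R : Type*} [CommRing R] {n : ℕ}
    (M : Matrix (Fin (n + 1)) (Fin (n + 1)) R) (i : Fin (n + 1)) :
    (M.updateRow i (Pi.single i 1)).det = (M.submatrix i.succAbove i.succAbove).det := by
  rw [← adjugate_apply, adjugate_fin_succ_eq_det_submatrix, Even.neg_one_pow ⟨i, rfl⟩, one_mul]

theorem Function.eq_of_add_update_eq {ι R : Type*} [Finite ι] [DecidableEq ι] [Add R]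
    [IsRightCancelAdd R] {f d : (ι → Bool) → R} (htop : f ⊤ = d ⊤)
    (hstep : ∀ s i, f (update s i false) + f (update s i true) =
      d (update s i false) + d (update s i true)) :
    f = d := by
  funext s
  induction s using WellFoundedGT.induction with
  | _ s ih =>
    by_cases hs : ∃ i, s i = false
    · obtain ⟨i, hi⟩ := hs
      have hlt : s < update s i true := lt_update_self_iff.2 (by simp [hi])
      have h := hstep s i
      rwa [← hi, update_eq_self, ih _ hlt, add_left_inj] at h
    · simp only [not_exists, Bool.not_eq_false] at hs
      obtain rfl : s = ⊤ := funext hs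
      exact htop

section Determinantal

variable {E : Type}

def cylinderEvent {ι : Type*} (g : ι → E) (s : ι → Bool) : Set (E → Bool) :=
  {η | ∀ i, η (g i) = s i}

theorem cylinderEvent_comp_equiv {ι κ : Type*} (e : κ ≃ ι) (g : ι → E) (s : ι → Bool) :
    cylinderEvent (g ∘ e) (s ∘ e) = cylinderEvent g s := by
  ext η
  exact e.forall_congr_right (q := fun i => η (g i) = s i)

theorem cylinderEvent_update {n : ℕ} (g : Fin (n + 1) → E) (s : Fin (n + 1) → Bool)
    (i : Fin (n + 1)) (b : Bool) :
    cylinderEvent g (update s i b) =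
      cylinderEvent (g ∘ i.succAbove) (s ∘ i.succAbove) ∩ {η | η (g i) = b} := by
  ext η
  simp only [cylinderEvent, Set.mem_ofPred_eq, Set.mem_inter_iff, Fin.forall_iff_succAbove i,
    update_self, Function.comp_apply, update_of_ne (Fin.succAbove_ne i _)]
  exact and_comm

theorem measure_cylinderEvent_update_add (P : Measure (E → Bool)) {n : ℕ} (g : Fin (n + 1) → E)
    (s : Fin (n + 1) → Bool) (i : Fin (n + 1)) :
    P (cylinderEvent g (update s i false)) + P (cylinderEvent g (update s i true)) =
      P (cylinderEvent (g ∘ i.succAbove) (s ∘ i.succAbove)) := by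
  have hfalse : MeasurableSet {η : E → Bool | η (g i) = false} :=
    measurableSet_eq_fun (measurable_pi_apply (g i)) measurable_const
  rw [cylinderEvent_update, cylinderEvent_update]
  convert measure_inter_add_sdiff _ hfalse using 3
  ext η
  simp

variable [DecidableEq E]

theorem orthonormal_stdBasis : Orthonormal ℂ (stdBasis : E → l2 E) := by
  rw [orthonormal_iff_ite]
  intro e f
  simp [_root_.stdBasis, lp.inner_single_left, lp.single_apply, Pi.single_apply]

variable {H : Submodule ℂ (l2 E)} [H.HasOrthogonalProjection] {P : Measure (E → Bool)}

theorem IsDeterminantalSubspace.measure_cylinderEvent_top (hP : IsDeterminantalSubspace H P)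
    {n : ℕ} (g : Fin n → E) (hg : Injective g) :
    ((P (cylinderEvent g ⊤)).toReal : ℂ) = (H.splitProjectionMatrix (stdBasis ∘ g) ⊤).det := by
  have hM : H.splitProjectionMatrix (stdBasis ∘ g) ⊤ = Matrix.of fun i j =>
      ⟪(H.orthogonalProjectionOnto (stdBasis (g i)) : l2 E), stdBasis (g j)⟫_ℂ := by
    ext i j
    simp [Submodule.splitProjectionMatrix, Submodule.splitProjection]
  rw [hM]
  exact hP n g hg

theorem IsDeterminantalSubspace.measure_cylinderEvent_fin [IsFiniteMeasure P]
    (hP : IsDeterminantalSubspace H P) :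
    ∀ {n : ℕ} (g : Fin n → E), Injective g → ∀ s : Fin n → Bool,
      ((P (cylinderEvent g s)).toReal : ℂ) = (H.splitProjectionMatrix (stdBasis ∘ g) s).det
  | 0, g, hg, s => Subsingleton.elim ⊤ s ▸ hP.measure_cylinderEvent_top g hg
  | n + 1, g, hg, s => by
    revert s
    rw [← funext_iff]
    refine Function.eq_of_add_update_eq (hP.measure_cylinderEvent_top g hg) fun s i => ?_
    rw [← Complex.ofReal_add, ← ENNReal.toReal_add (measure_ne_top _ _) (measure_ne_top _ _),
      measure_cylinderEvent_update_add,
      H.det_splitProjectionMatrix_update_add _ _ (orthonormal_stdBasis.comp g hg),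
      det_updateRow_single_self]
    exact hP.measure_cylinderEvent_fin (g ∘ i.succAbove) (hg.comp Fin.succAbove_right_injective) _

theorem IsDeterminantalSubspace.measure_cylinderEvent [IsFiniteMeasure P]
    (hP : IsDeterminantalSubspace H P) {ι : Type*} [Fintype ι] [DecidableEq ι] (g : ι → E)
    (hg : Injective g) (s : ι → Bool) :
    ((P (cylinderEvent g s)).toReal : ℂ) = (H.splitProjectionMatrix (stdBasis ∘ g) s).det := by
  let e := (Fintype.equivFin ι).symm
  rw [← cylinderEvent_comp_equiv e, ← det_submatrix_equiv_self e]
  exact hP.measure_cylinderEvent_fin (g ∘ e) (hg.comp e.injective) (s ∘ e)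

end Determinantal

theorem statement8_general {E : Type} [DecidableEq E]
    (H : Submodule ℂ (l2 E))
    [Submodule.HasOrthogonalProjection H]
    (P : Measure (E → Bool)) (hP : IsProbabilityMeasure P)
    (hPdet : IsDeterminantalSubspace H P)
    (A B : Finset E) (hAB : Disjoint A B) :
    0 < P {η : E → Bool | (∀ a ∈ A, η a = true) ∧ (∀ b ∈ B, η b = false)} ↔
      LinearIndependent ℂ
        (Sum.elim
          (fun a : ↥A => ((Submodule.orthogonalProjectionOnto H (stdBasis (a : E))) : l2 E))
          (fun b : ↥B => ((Submodule.orthogonalProjectionOnto Hᗮ (stdBasis (b : E))) : l2 E))) := by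
  let g : A ⊕ B → E := Sum.elim Subtype.val Subtype.val
  have hg : Injective g := Subtype.val_injective.sumElim Subtype.val_injective
    fun a b hab => Finset.disjoint_left.1 hAB a.2 (hab ▸ b.2)
  have hevent : {η : E → Bool | (∀ a ∈ A, η a = true) ∧ (∀ b ∈ B, η b = false)} =
      cylinderEvent g (Sum.elim ⊤ ⊥) := by
    ext η
    simp [cylinderEvent, Sum.forall, g]
  have hfamily : Sum.elim
      (fun a : ↥A => ((Submodule.orthogonalProjectionOnto H (stdBasis (a : E))) : l2 E))
      (fun b : ↥B => ((Submodule.orthogonalProjectionOnto Hᗮ (stdBasis (b : E))) : l2 E)) =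
      H.splitProjection (stdBasis ∘ g) (Sum.elim ⊤ ⊥) := by
    ext (a | b) <;> simp [Submodule.splitProjection, g]
  rw [hevent, hfamily,
    ← H.det_splitProjectionMatrix_ne_zero_iff _ _ (orthonormal_stdBasis.comp g hg),
    ← hPdet.measure_cylinderEvent g hg, Ne, Complex.ofReal_eq_zero, ENNReal.toReal_eq_zero_iff,
    pos_iff_ne_zero]
  simp [measure_ne_top]

/-- For a closed subspace `H` of `ℓ²(E)` and disjoint finite `A, B ⊆ E`,
`P^H[η ≡ 1 on A, η ≡ 0 on B] > 0` iff the family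
`{P_H e}_{e ∈ A} ∪ {P_{H^⊥} e}_{e ∈ B}` is linearly independent. -/
theorem statement8 {E : Type} [Countable E] [DecidableEq E]
    (H : Submodule ℂ (l2 E)) (hH : IsClosed (H : Set (l2 E)))
    [Submodule.HasOrthogonalProjection H]
    (P : Measure (E → Bool)) (hP : IsProbabilityMeasure P)
    (hPdet : IsDeterminantalSubspace H P)
    (A B : Finset E) (hAB : Disjoint A B) :
    0 < P {η : E → Bool | (∀ a ∈ A, η a = true) ∧ (∀ b ∈ B, η b = false)} ↔
      LinearIndependent ℂ
        (Sum.elim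
          (fun a : ↥A => ((Submodule.orthogonalProjectionOnto H (stdBasis (a : E))) : l2 E))
          (fun b : ↥B => ((Submodule.orthogonalProjectionOnto Hᗮ (stdBasis (b : E))) : l2 E))) :=
  statement8_general H P hP hPdet A B hAB

end
end
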